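/- Let ε > 0, let A, Q : [0,1] → ℝ^{n×n}, B : [0,1] → ℝ^{n×m}, R : [0,1] → ℝ^{m×m} with R(τ) invertible for all τ, and write S(τ) := B(τ) R(τ)⁻¹ B(τ)ᵀ. Suppose P_a, P_b : [0,1] → ℝ^{n×n} are differentiable, each satisfies the differential Riccati equation ε Ṗ(τ) = −A(τ)ᵀ P(τ) − P(τ) A(τ) + P(τ) S(τ) P(τ) − Q(τ), and P_b(τ) − P_a(τ) is invertible for every τ ∈ [0,1]. Let x, p : [0,1] → ℝⁿ be differentiable solutions of the Hamiltonian system ε ẋ = A x − S p, ε ṗ = −Q x − Aᵀ p. Define x_b(τ) := (P_b(τ) − P_a(τ))⁻¹ (p(τ) − P_a(τ) x(τ)) and x_a(τ) := x(τ) − x_b(τ). Then x_a and x_b are differentiable and satisfy the decoupled equations ε ẋ_a(τ) = (A(τ) − S(τ) P_a(τ)) x_a(τ) and ε ẋ_b(τ) = (A(τ) − S(τ) P_b(τ)) x_b(τ) for all τ ∈ [0,1]. -/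

import Mathlib

/-!
Put `D := P_b - P_a` and `w := p - P_a x`. Because `P_a` solves the Riccati equation, the graph
`p = P_a x` is invariant under the Hamiltonian flow, so `w` solves the closed linear equation
`ε ẇ = (P_a S - Aᵀ) w`. Subtracting the two Riccati equations gives
`ε Ḋ = (P_a S - Aᵀ) D - D (A - S P_b)`, i.e. `D` intertwines the generators `A - S P_b` and
`P_a S - Aᵀ`; hence `x_b = D⁻¹ w` solves `ε ẋ_b = (A - S P_b) x_b`. Finally `x = x_a + x_b` and
`p = P_a x_a + P_b x_b`, so `A x - S p = (A - S P_a) x_a + (A - S P_b) x_b`, which leaves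
`ε ẋ_a = (A - S P_a) x_a`.
-/

open Matrix Set

attribute [local instance] Matrix.normedAddCommGroup Matrix.normedSpace

section Calculus

variable {𝕜 : Type*} [NontriviallyNormedField 𝕜] {τ : 𝕜}

theorem HasDerivAt.ringInverse {R : Type*} [NormedRing R] [NormedAlgebra 𝕜 R]
    [HasSummableGeomSeries R] {D : 𝕜 → R} {D' : R} (hD : HasDerivAt D D' τ) (hu : IsUnit (D τ)) :
    HasDerivAt (fun t => Ring.inverse (D t))
      (-(Ring.inverse (D τ) * D' * Ring.inverse (D τ))) τ := by
  obtain ⟨u, hu⟩ := hu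
  have h := hasFDerivAt_ringInverse (𝕜 := 𝕜) u
  rw [hu] at h
  have hderiv : -(Ring.inverse (D τ) * D' * Ring.inverse (D τ))
      = (-ContinuousLinearMap.mulLeftRight 𝕜 R ↑u⁻¹ ↑u⁻¹) D' := by
    simp [← hu]
  rw [hderiv]
  exact h.comp_hasDerivAt τ hD

variable [CompleteSpace 𝕜] {ι : Type*} [Fintype ι]

theorem HasDerivAt.matrix_mulVec {κ : Type*} [Fintype κ]
    {M : 𝕜 → Matrix κ ι 𝕜} {M' : Matrix κ ι 𝕜} {v : 𝕜 → ι → 𝕜} {v' : ι → 𝕜}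
    (hM : HasDerivAt M M' τ) (hv : HasDerivAt v v' τ) :
    HasDerivAt (fun t => M t *ᵥ v t) (M' *ᵥ v τ + M τ *ᵥ v') τ := by
  let B : Matrix κ ι 𝕜 →L[𝕜] (ι → 𝕜) →L[𝕜] κ → 𝕜 :=
    LinearMap.toContinuousLinearMap
      (LinearMap.toContinuousLinearMap.toLinearMap ∘ₗ Matrix.mulVecBilin 𝕜 𝕜)
  rw [add_comm]
  exact B.hasDerivAt_of_bilinear (fun _ => hM) (fun _ => hv)

theorem HasDerivAt.matrix_inv [DecidableEq ι] {D : 𝕜 → Matrix ι ι 𝕜} {D' : Matrix ι ι 𝕜}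
    (hD : HasDerivAt D D' τ) (hu : IsUnit (D τ)) :
    HasDerivAt (fun t => (D t)⁻¹) (-((D τ)⁻¹ * D' * (D τ)⁻¹)) τ := by
  -- `HasDerivAt` only sees the topology, which the operator norm shares with the sup norm.
  let _ := Matrix.linftyOpNormedRing (n := ι) (α := 𝕜)
  let _ := Matrix.linftyOpNormedAlgebra (n := ι) (R := 𝕜) (α := 𝕜)
  have : @CompleteSpace (Matrix ι ι 𝕜) Matrix.linftyOpNormedRing.toUniformSpace :=
    FiniteDimensional.complete 𝕜 _
  simp only [Matrix.nonsing_inv_eq_ringInverse]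
  exact hD.ringInverse hu

theorem exists_hasDerivAt_inv_mulVec_of_intertwining [DecidableEq ι] {ε : 𝕜}
    {D : 𝕜 → Matrix ι ι 𝕜} {D' L M : Matrix ι ι 𝕜} {w : 𝕜 → ι → 𝕜} {w' : ι → 𝕜}
    (hD : HasDerivAt D D' τ) (hu : IsUnit (D τ)) (hD' : ε • D' = L * D τ - D τ * M)
    (hw : HasDerivAt w w' τ) (hw' : ε • w' = L *ᵥ w τ) :
    ∃ y', HasDerivAt (fun t => (D t)⁻¹ *ᵥ w t) y' τ ∧ ε • y' = M *ᵥ ((D τ)⁻¹ *ᵥ w τ) := by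
  refine ⟨_, (hD.matrix_inv hu).matrix_mulVec hw, ?_⟩
  have hdet : IsUnit (D τ).det := (isUnit_iff_isUnit_det _).mp hu
  have hconj : ε • -((D τ)⁻¹ * D' * (D τ)⁻¹) = M * (D τ)⁻¹ - (D τ)⁻¹ * L := by
    rw [smul_neg, ← smul_mul_assoc, ← mul_smul_comm, hD', mul_sub, sub_mul,
      nonsing_inv_mul_cancel_left _ _ hdet, ← mul_assoc, mul_nonsing_inv_cancel_right _ _ hdet,
      neg_sub]
  rw [smul_add, ← smul_mulVec, ← mulVec_smul, hconj, hw', sub_mulVec, mulVec_mulVec,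
    mulVec_mulVec, sub_add_cancel]

end Calculus

section Algebra

variable {K : Type*} [CommRing K] {ι : Type*} [Fintype ι] {ε : K} {A S Q : Matrix ι ι K}

theorem riccati_sub {Pa Pb Pa' Pb' : Matrix ι ι K}
    (hPa : ε • Pa' = -(Aᵀ * Pa) - Pa * A + Pa * S * Pa - Q)
    (hPb : ε • Pb' = -(Aᵀ * Pb) - Pb * A + Pb * S * Pb - Q) :
    ε • (Pb' - Pa') = (Pa * S - Aᵀ) * (Pb - Pa) - (Pb - Pa) * (A - S * Pb) := by
  rw [smul_sub, hPa, hPb]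
  noncomm_ring

theorem riccati_graph_residual {P P' : Matrix ι ι K} {x x' p p' : ι → K}
    (hP : ε • P' = -(Aᵀ * P) - P * A + P * S * P - Q)
    (hx : ε • x' = A *ᵥ x - S *ᵥ p) (hp : ε • p' = -(Q *ᵥ x) - Aᵀ *ᵥ p) :
    ε • (p' - (P' *ᵥ x + P *ᵥ x')) = (P * S - Aᵀ) *ᵥ (p - P *ᵥ x) := by
  rw [smul_sub, smul_add, ← smul_mulVec, ← mulVec_smul, hP, hx, hp]
  simp only [add_mulVec, sub_mulVec, neg_mulVec, mulVec_sub, ← mulVec_mulVec]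
  abel

theorem hamiltonian_field_split (Pa Pb : Matrix ι ι K) (xa xb : ι → K) :
    A *ᵥ (xa + xb) - S *ᵥ (Pa *ᵥ xa + Pb *ᵥ xb)
      = (A - S * Pa) *ᵥ xa + (A - S * Pb) *ᵥ xb := by
  simp only [sub_mulVec, mulVec_add, ← mulVec_mulVec]
  abel

end Algebra

theorem hamiltonian_system_decouples_general {n : ℕ}
    (ε : ℝ)
    (A Q : ℝ → Matrix (Fin n) (Fin n) ℝ)
    (S : ℝ → Matrix (Fin n) (Fin n) ℝ)
    (Pa Pb : ℝ → Matrix (Fin n) (Fin n) ℝ)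
    (hPa : ∀ τ ∈ Icc (0 : ℝ) 1, ∃ Pa' : Matrix (Fin n) (Fin n) ℝ,
      HasDerivAt Pa Pa' τ ∧
      ε • Pa' = -((A τ)ᵀ * Pa τ) - Pa τ * A τ + Pa τ * S τ * Pa τ - Q τ)
    (hPb : ∀ τ ∈ Icc (0 : ℝ) 1, ∃ Pb' : Matrix (Fin n) (Fin n) ℝ,
      HasDerivAt Pb Pb' τ ∧
      ε • Pb' = -((A τ)ᵀ * Pb τ) - Pb τ * A τ + Pb τ * S τ * Pb τ - Q τ)
    (hinv : ∀ τ ∈ Icc (0 : ℝ) 1, IsUnit (Pb τ - Pa τ))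
    (x p : ℝ → (Fin n → ℝ))
    (hx : ∀ τ ∈ Icc (0 : ℝ) 1, ∃ x' : Fin n → ℝ,
      HasDerivAt x x' τ ∧ ε • x' = A τ *ᵥ x τ - S τ *ᵥ p τ)
    (hp : ∀ τ ∈ Icc (0 : ℝ) 1, ∃ p' : Fin n → ℝ,
      HasDerivAt p p' τ ∧ ε • p' = -(Q τ *ᵥ x τ) - (A τ)ᵀ *ᵥ p τ)
    (xb xa : ℝ → (Fin n → ℝ))
    (hxb : ∀ τ, xb τ = (Pb τ - Pa τ)⁻¹ *ᵥ (p τ - Pa τ *ᵥ x τ))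
    (hxa : ∀ τ, xa τ = x τ - xb τ) :
    ∀ τ ∈ Icc (0 : ℝ) 1,
      (∃ xa' : Fin n → ℝ, HasDerivAt xa xa' τ ∧
        ε • xa' = (A τ - S τ * Pa τ) *ᵥ xa τ) ∧
      (∃ xb' : Fin n → ℝ, HasDerivAt xb xb' τ ∧
        ε • xb' = (A τ - S τ * Pb τ) *ᵥ xb τ) := by
  intro τ hτ
  obtain ⟨Pa', hPa', hεPa⟩ := hPa τ hτ
  obtain ⟨Pb', hPb', hεPb⟩ := hPb τ hτ
  obtain ⟨x', hx', hεx⟩ := hx τ hτ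
  obtain ⟨p', hp', hεp⟩ := hp τ hτ
  obtain ⟨xb', hxb', hεxb⟩ := exists_hasDerivAt_inv_mulVec_of_intertwining (hPb'.sub hPa')
    (hinv τ hτ) (riccati_sub hεPa hεPb) (hp'.sub (hPa'.matrix_mulVec hx'))
    (riccati_graph_residual hεPa hεx hεp)
  replace hxb' : HasDerivAt xb xb' τ := by rw [funext hxb]; exact hxb'
  replace hεxb : ε • xb' = (A τ - S τ * Pb τ) *ᵥ xb τ := by rw [hxb]; exact hεxb
  have hsplit : p τ = Pa τ *ᵥ xa τ + Pb τ *ᵥ xb τ := by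
    have hD : Pb τ *ᵥ xb τ - Pa τ *ᵥ xb τ = p τ - Pa τ *ᵥ x τ := by
      rw [← sub_mulVec, hxb, mulVec_mulVec,
        mul_nonsing_inv _ ((isUnit_iff_isUnit_det _).mp (hinv τ hτ)), one_mulVec]
    rw [hxa, mulVec_sub]
    linear_combination (norm := module) -hD
  refine ⟨⟨x' - xb', by rw [funext hxa]; exact hx'.sub hxb', ?_⟩, ⟨xb', hxb', hεxb⟩⟩
  rw [smul_sub, hεx, hεxb, hsplit, show x τ = xa τ + xb τ by rw [hxa, sub_add_cancel],
    hamiltonian_field_split, add_sub_cancel_right]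

/-- **The Riccati transformation decouples the Hamiltonian system.**
If `P_a, P_b` solve the differential Riccati equation
`ε Ṗ = −AᵀP − PA + P S P − Q` (with `S = B R⁻¹ Bᵀ`), `P_b − P_a` is everywhere
invertible, and `x, p` solve the Hamiltonian system `ε ẋ = A x − S p`,
`ε ṗ = −Q x − Aᵀ p`, then `x_b := (P_b − P_a)⁻¹ (p − P_a x)` and `x_a := x − x_b`
are differentiable and satisfy the decoupled equations
`ε ẋ_a = (A − S P_a) x_a` and `ε ẋ_b = (A − S P_b) x_b` on `[0,1]`. -/
theorem hamiltonian_system_decouples {n m : ℕ}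
    (ε : ℝ) (hε : 0 < ε)
    (A Q : ℝ → Matrix (Fin n) (Fin n) ℝ) (B : ℝ → Matrix (Fin n) (Fin m) ℝ)
    (R : ℝ → Matrix (Fin m) (Fin m) ℝ) (hR : ∀ τ, IsUnit (R τ))
    (S : ℝ → Matrix (Fin n) (Fin n) ℝ) (hS : ∀ τ, S τ = B τ * (R τ)⁻¹ * (B τ)ᵀ)
    (Pa Pb : ℝ → Matrix (Fin n) (Fin n) ℝ)
    (hPa : ∀ τ ∈ Icc (0 : ℝ) 1, ∃ Pa' : Matrix (Fin n) (Fin n) ℝ,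
      HasDerivAt Pa Pa' τ ∧
      ε • Pa' = -((A τ)ᵀ * Pa τ) - Pa τ * A τ + Pa τ * S τ * Pa τ - Q τ)
    (hPb : ∀ τ ∈ Icc (0 : ℝ) 1, ∃ Pb' : Matrix (Fin n) (Fin n) ℝ,
      HasDerivAt Pb Pb' τ ∧
      ε • Pb' = -((A τ)ᵀ * Pb τ) - Pb τ * A τ + Pb τ * S τ * Pb τ - Q τ)
    (hinv : ∀ τ ∈ Icc (0 : ℝ) 1, IsUnit (Pb τ - Pa τ))
    (x p : ℝ → (Fin n → ℝ))
    (hx : ∀ τ ∈ Icc (0 : ℝ) 1, ∃ x' : Fin n → ℝ,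
      HasDerivAt x x' τ ∧ ε • x' = A τ *ᵥ x τ - S τ *ᵥ p τ)
    (hp : ∀ τ ∈ Icc (0 : ℝ) 1, ∃ p' : Fin n → ℝ,
      HasDerivAt p p' τ ∧ ε • p' = -(Q τ *ᵥ x τ) - (A τ)ᵀ *ᵥ p τ)
    (xb xa : ℝ → (Fin n → ℝ))
    (hxb : ∀ τ, xb τ = (Pb τ - Pa τ)⁻¹ *ᵥ (p τ - Pa τ *ᵥ x τ))
    (hxa : ∀ τ, xa τ = x τ - xb τ) :
    ∀ τ ∈ Icc (0 : ℝ) 1,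
      (∃ xa' : Fin n → ℝ, HasDerivAt xa xa' τ ∧
        ε • xa' = (A τ - S τ * Pa τ) *ᵥ xa τ) ∧
      (∃ xb' : Fin n → ℝ, HasDerivAt xb xb' τ ∧
        ε • xb' = (A τ - S τ * Pb τ) *ᵥ xb τ) :=
  hamiltonian_system_decouples_general ε A Q S Pa Pb hPa hPb hinv x p hx hp xb xa hxb hxa
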